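/- arXiv:math/0201104 — 4 statements merged into one kernel-verified Lean document; each statement's English description precedes it below -/
import Mathlib

section
/- If the pair of flags (B_•, C_•) lies in the orbit F_M for a transport matrix M, then dim(B_i ∩ C_j) = r_{ij}(M) for all (i,j) ∈ [0,q]×[0,r]. -/
open Finset

namespace TwoFlagsLine

/-- Rank numbers `r_{ij}(M) = Σ_{k ≤ i, l ≤ j} m_{kl}` (1-based; zero if `i = 0` or `j = 0`). -/
def rk (m : ℕ → ℕ → ℕ) (i j : ℕ) : ℕ :=
  ∑ k ∈ Finset.Icc 1 i, ∑ l ∈ Finset.Icc 1 j, m k l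

/-- `b` is a composition of `n` with `q` parts `b 1, …, b q`. -/
def IsComposition (n q : ℕ) (b : ℕ → ℕ) : Prop :=
  (∀ i ∈ Finset.Icc 1 q, 0 < b i) ∧ ∑ i ∈ Finset.Icc 1 q, b i = n

/-- `m` is a `q × r` transport matrix for the compositions `b`, `c`. -/
def IsTransport (q r : ℕ) (b c : ℕ → ℕ) (m : ℕ → ℕ → ℕ) : Prop :=
  (∀ i j : ℕ, i ∉ Finset.Icc 1 q ∨ j ∉ Finset.Icc 1 r → m i j = 0) ∧
  (∀ i ∈ Finset.Icc 1 q, ∑ j ∈ Finset.Icc 1 r, m i j = b i) ∧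
  (∀ j ∈ Finset.Icc 1 r, ∑ i ∈ Finset.Icc 1 q, m i j = c j)

/-- `Δ` is a decoration of the matrix `m`. -/
def IsDecoration (q r : ℕ) (m : ℕ → ℕ → ℕ) (Δ : Finset (ℕ × ℕ)) : Prop :=
  Δ.Nonempty ∧
  (∀ p ∈ Δ, 1 ≤ p.1 ∧ p.1 ≤ q ∧ 1 ≤ p.2 ∧ p.2 ≤ r ∧ 0 < m p.1 p.2) ∧
  (∀ p ∈ Δ, ∀ p' ∈ Δ, p ≠ p' → (p.1 < p'.1 ∧ p'.2 < p.2) ∨ (p'.1 < p.1 ∧ p.2 < p'.2))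

/-- `δ_{ij}(Δ) = 1` if every `(k,l) ∈ Δ` has `k ≤ i` or `l ≤ j`, else `0`. -/
def deltaNum (Δ : Finset (ℕ × ℕ)) (i j : ℕ) : ℕ :=
  if ∀ p ∈ Δ, p.1 ≤ i ∨ p.2 ≤ j then 1 else 0

/-- `[S]` : the set of `≤`-maximal elements of `S`. -/
def maxl (S : Finset (ℕ × ℕ)) : Finset (ℕ × ℕ) :=
  S.filter fun p => ∀ p' ∈ S, p ≤ p' → p = p'

/-- The index set `{(i,j,k) : (i,j) ∈ [1,q] × [1,r], 1 ≤ k ≤ m i j}` for a basis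
adapted to the transport matrix `m`. -/
def Idx (q r : ℕ) (m : ℕ → ℕ → ℕ) : Set (ℕ × ℕ × ℕ) :=
  {p | 1 ≤ p.1 ∧ p.1 ≤ q ∧ 1 ≤ p.2.1 ∧ p.2.1 ≤ r ∧ 1 ≤ p.2.2 ∧ p.2.2 ≤ m p.1 p.2.1}

variable (k V : Type*) [Field k] [AddCommGroup V] [Module k V]

/-- The family `v`, restricted to the index set of the transport matrix `m`,
is a basis of `V` indexed by `m`. -/
def IsMBasis (q r : ℕ) (m : ℕ → ℕ → ℕ) (v : ℕ × ℕ × ℕ → V) : Prop :=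
  LinearIndependent k (fun x : Idx q r m => v x.1) ∧
  Submodule.span k (v '' Idx q r m) = ⊤

/-- `(B, C)` lies in the orbit `F_M`: for some basis `v` indexed by `M`,
`B i = span{v_{i'jk} : i' ≤ i}` and `C j = span{v_{ij'k} : j' ≤ j}`. -/
def InOrbit (q r : ℕ) (m : ℕ → ℕ → ℕ) (B C : ℕ → Submodule k V) : Prop :=
  ∃ v : ℕ × ℕ × ℕ → V, IsMBasis k V q r m v ∧
    (∀ i ≤ q, B i = Submodule.span k (v '' {p | p ∈ Idx q r m ∧ p.1 ≤ i})) ∧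
    (∀ j ≤ r, C j = Submodule.span k (v '' {p | p ∈ Idx q r m ∧ p.2.1 ≤ j}))

/-- `(A, B, C)` lies in the orbit `F_{M,Δ}`: for some basis `v` indexed by `M`,
`B, C` are as in `F_M` and `A = span(Σ_{(i,j) ∈ Δ} v_{ij1})`. -/
def InOrbitDec (q r : ℕ) (m : ℕ → ℕ → ℕ) (Δ : Finset (ℕ × ℕ))
    (A : Submodule k V) (B C : ℕ → Submodule k V) : Prop :=
  ∃ v : ℕ × ℕ × ℕ → V, IsMBasis k V q r m v ∧
    (∀ i ≤ q, B i = Submodule.span k (v '' {p | p ∈ Idx q r m ∧ p.1 ≤ i})) ∧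
    (∀ j ≤ r, C j = Submodule.span k (v '' {p | p ∈ Idx q r m ∧ p.2.1 ≤ j})) ∧
    A = Submodule.span k {∑ p ∈ Δ, v (p.1, p.2, 1)}

/-- `B` is a partial flag `0 = B 0 ⊆ B 1 ⊆ ⋯ ⊆ B q = V` with
`dim (B i / B (i-1)) = b i`. -/
def IsFlag (q : ℕ) (b : ℕ → ℕ) (B : ℕ → Submodule k V) : Prop :=
  B 0 = ⊥ ∧ B q = ⊤ ∧ (∀ i : ℕ, 1 ≤ i → i ≤ q → B (i - 1) ≤ B i) ∧
  (∀ i : ℕ, 1 ≤ i → i ≤ q →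
    Module.finrank k (↥(B i) ⧸ Submodule.comap (B i).subtype (B (i - 1))) = b i)
/-! A basis adapted to `M` is adapted to both flags at once: every `B i` and every `C j` is
spanned by a subset of the basis. Spans of subsets of a linearly independent family intersect
in the span of the intersection, so `B i ⊓ C j` is spanned by the basis vectors `v_{i'j'l}` with
`i' ≤ i`, `j' ≤ j`, and there are `r_{ij}(M)` of them. -/

section LinearIndepOn

variable {R M ι : Type*} [Ring R] [AddCommGroup M] [Module R M] {v : ι → M} {I : Set ι}

open Submodule Set in
theorem _root_.LinearIndepOn.span_image_inf_span_image (hv : LinearIndepOn R v I)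
    {s t : Set ι} (hs : s ⊆ I) (ht : t ⊆ I) :
    span R (v '' s) ⊓ span R (v '' t) = span R (v '' (s ∩ t)) := by
  have hdisj : Disjoint (span R (v '' (s \ t))) (span R (v '' t)) :=
    ((linearIndepOn_union_iff disjoint_sdiff_left).mp
      (hv.mono (union_subset (sdiff_subset.trans hs) ht))).2.2
  calc span R (v '' s) ⊓ span R (v '' t)
      = (span R (v '' (s ∩ t)) ⊔ span R (v '' (s \ t))) ⊓ span R (v '' t) := by
        rw [← span_union, ← image_union, inter_union_sdiff]
    _ = span R (v '' (s ∩ t)) := by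
        rw [sup_inf_assoc_of_le _ (span_mono (image_mono inter_subset_right)), hdisj.eq_bot,
          sup_bot_eq]

theorem _root_.LinearIndepOn.finrank_span_image_finset [StrongRankCondition R]
    (hv : LinearIndepOn R v I) {F : Finset ι} (hF : ↑F ⊆ I) :
    Module.finrank R (Submodule.span R (v '' F)) = F.card := by
  classical
  have := nontrivial_of_invariantBasisNumber R
  have hvF : LinearIndepOn R v F := hv.mono hF
  rw [← Finset.coe_image, finrank_span_finset_eq_card (by simpa using hvF.id_image),
    card_image_of_injOn hvF.injOn]

end LinearIndepOn

def boxIdx (m : ℕ → ℕ → ℕ) (i j : ℕ) : Finset (ℕ × ℕ × ℕ) :=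
  (Icc 1 i ×ˢ Icc 1 j).biUnion fun a => (Icc 1 (m a.1 a.2)).image fun l => (a.1, a.2, l)

theorem card_boxIdx (m : ℕ → ℕ → ℕ) (i j : ℕ) : (boxIdx m i j).card = rk m i j := by
  rw [boxIdx, card_biUnion, rk, sum_product]
  · refine sum_congr rfl fun a _ => sum_congr rfl fun b _ => ?_
    rw [card_image_of_injective _ fun l l' h => by simpa using h, Nat.card_Icc,
      Nat.add_sub_cancel]
  · rintro ⟨a, b⟩ - ⟨a', b'⟩ - hne
    simp only [disjoint_left, mem_image]
    rintro _ ⟨l, -, rfl⟩ ⟨l', -, h⟩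
    simp_all

theorem coe_boxIdx {q r : ℕ} (m : ℕ → ℕ → ℕ) {i j : ℕ} (hi : i ≤ q) (hj : j ≤ r) :
    (boxIdx m i j : Set (ℕ × ℕ × ℕ)) =
      {p | p ∈ Idx q r m ∧ p.1 ≤ i} ∩ {p | p ∈ Idx q r m ∧ p.2.1 ≤ j} := by
  ext ⟨a, b, l⟩
  simp only [boxIdx, coe_biUnion, coe_image, mem_coe, mem_product, mem_Icc, Set.mem_iUnion,
    Set.mem_image, Prod.mk.injEq, Idx, Set.mem_inter_iff, Set.mem_ofPred_eq]
  constructor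
  · rintro ⟨⟨a, b⟩, ⟨⟨ha1, ha⟩, hb1, hb⟩, l, hl, rfl, rfl, rfl⟩
    have hidx : (a, b, l) ∈ Idx q r m := ⟨ha1, ha.trans hi, hb1, hb.trans hj, hl⟩
    exact ⟨⟨hidx, ha⟩, hidx, hb⟩
  · rintro ⟨⟨⟨ha1, -, hb1, -, hl⟩, ha⟩, -, hb⟩
    exact ⟨(a, b), ⟨⟨ha1, ha⟩, hb1, hb⟩, l, hl, rfl, rfl, rfl⟩

theorem orbit_rank_general (q r : ℕ)
    {k V : Type*} [Field k] [AddCommGroup V] [Module k V]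
    (m : ℕ → ℕ → ℕ)
    (B C : ℕ → Submodule k V) (horb : InOrbit k V q r m B C) :
    ∀ i ≤ q, ∀ j ≤ r, Module.finrank k ↥(B i ⊓ C j) = rk m i j := by
  obtain ⟨v, ⟨hv, -⟩, hB, hC⟩ := horb
  have hv : LinearIndepOn k v (Idx q r m) := hv
  intro i hi j hj
  have hbox := coe_boxIdx m hi hj
  rw [hB i hi, hC j hj, hv.span_image_inf_span_image (fun p hp => hp.1) (fun p hp => hp.1),
    ← hbox, hv.finrank_span_image_finset (hbox.subset.trans fun p hp => hp.1.1), card_boxIdx]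

/-- if `(B, C) ∈ F_M`, then `dim (B i ∩ C j) = r_{ij}(M)` for all
`(i,j) ∈ [0,q] × [0,r]`. -/
theorem orbit_rank (n q r : ℕ) (hn : 0 < n) (hq : 0 < q) (hr : 0 < r)
    (b c : ℕ → ℕ) (hb : IsComposition n q b) (hc : IsComposition n r c)
    {k V : Type*} [Field k] [Infinite k] [AddCommGroup V] [Module k V]
    [FiniteDimensional k V] (hdim : Module.finrank k V = n)
    (m : ℕ → ℕ → ℕ) (hm : IsTransport q r b c m)
    (B C : ℕ → Submodule k V) (horb : InOrbit k V q r m B C) :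
    ∀ i ≤ q, ∀ j ≤ r, Module.finrank k ↥(B i ⊓ C j) = rk m i j :=
  orbit_rank_general q r m B C horb

end TwoFlagsLine
end

section
/- Let B_• and C_• be flags in V with dim(B_i/B_{i−1}) = b_i for i=1,…,q and dim(C_j/C_{j−1}) = c_j for j=1,…,r, and let M be a transport matrix. Then (B_•, C_•) ∈ F_M if and only if dim(B_i ∩ C_j) = r_{ij}(M) for all (i,j) ∈ [1,q]×[1,r]. -/
/-!
In a basis adapted to `M`, each `B i ⊓ C j` is spanned by the basis vectors of the rectangle
`[1, i] × [1, j]`, because spans of subfamilies of an independent family intersect like their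
index sets; counting them gives `r_{ij}(M)`.

Conversely, since `B (i-1) ⊓ C j` and `B i ⊓ C (j-1)` meet in `B (i-1) ⊓ C (j-1)`, the rank
numbers say that their sum has codimension exactly `m_{ij}` in `B i ⊓ C j`. Choosing `m_{ij}`
complement vectors for every cell gives, by induction over rectangles, a family spanning every
`B i ⊓ C j`; it spans `V` with `r_{qr}(M) = dim V` vectors, so it is a basis.
-/

open Finset

namespace TwoFlagsLine

variable (k V : Type*) [Field k] [AddCommGroup V] [Module k V]

variable {k V}

section LinearIndepOn

variable {R M ι : Type*} [Semiring R] [AddCommMonoid M] [Module R M] {v : ι → M}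

theorem LinearIndepOn.span_image_inter {s t : Set ι} (hv : LinearIndepOn R v (s ∪ t)) :
    Submodule.span R (v '' (s ∩ t)) = Submodule.span R (v '' s) ⊓ Submodule.span R (v '' t) := by
  refine le_antisymm (le_inf (Submodule.span_mono (Set.image_mono Set.inter_subset_left))
    (Submodule.span_mono (Set.image_mono Set.inter_subset_right))) ?_
  rintro x ⟨hxs, hxt⟩
  obtain ⟨l, hl, rfl⟩ := (Finsupp.mem_span_image_iff_linearCombination R).1 hxs
  obtain ⟨l', hl', hll'⟩ := (Finsupp.mem_span_image_iff_linearCombination R).1 hxt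
  have hl'l : l' = l := linearIndepOn_iffₛ.1 hv l'
    (Finsupp.supported_mono Set.subset_union_right hl') l
    (Finsupp.supported_mono Set.subset_union_left hl) hll'
  refine (Finsupp.mem_span_image_iff_linearCombination R).2 ⟨l, ?_, rfl⟩
  rw [Finsupp.supported_inter]
  exact ⟨hl, hl'l ▸ hl'⟩

theorem LinearIndepOn.finrank_span_image [Nontrivial R] [StrongRankCondition R] {s : Finset ι}
    (hv : LinearIndepOn R v (s : Set ι)) :
    Module.finrank R (Submodule.span R (v '' s)) = #s := by
  rw [Set.image_eq_range, finrank_span_eq_card hv]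
  exact Fintype.card_coe s

theorem linearIndepOn_of_span_image_eq_top_of_card_eq_finrank [OrzechProperty R]
    {s : Finset ι} (hs : Submodule.span R (v '' s) = ⊤) (hcard : #s = Module.finrank R M) :
    LinearIndepOn R v (s : Set ι) :=
  linearIndependent_of_top_le_span_of_card_eq_finrank (by rw [← Set.image_eq_range, hs])
    (by rw [← hcard]; exact Fintype.card_coe s)

end LinearIndepOn

theorem exists_image_Icc_eq_range {α : Type*} [Zero α] {d : ℕ} (f : Fin d → α) :
    ∃ u : ℕ → α, u '' Set.Icc 1 d = Set.range f := by
  refine ⟨fun t => if h : t - 1 < d then f ⟨t - 1, h⟩ else 0, Set.ext fun x => ⟨?_, ?_⟩⟩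
  · rintro ⟨t, ⟨ht1, htd⟩, rfl⟩
    exact ⟨⟨t - 1, by omega⟩, by simp only [dif_pos (show t - 1 < d by omega)]⟩
  · rintro ⟨i, rfl⟩
    exact ⟨i + 1, ⟨by omega, i.2⟩, by simp⟩

section Complement

variable {K W : Type*} [DivisionRing K] [AddCommGroup W] [Module K W] [FiniteDimensional K W]

theorem exists_sup_span_image_Icc_eq {S T : Submodule K W} (hST : S ≤ T) {d : ℕ}
    (hd : Module.finrank K S + d = Module.finrank K T) :
    ∃ u : ℕ → W, S ⊔ Submodule.span K (u '' Set.Icc 1 d) = T := by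
  obtain ⟨U, hSU, hSUT⟩ := IsModularLattice.exists_disjoint_and_sup_eq hST
  have hU : Module.finrank K (Submodule.span K (U : Set W)) = d := by
    have := Submodule.finrank_sup_add_finrank_inf_eq S U
    rw [hSU.eq_bot, finrank_bot, hSUT] at this
    rw [Submodule.span_eq]
    omega
  obtain ⟨f, -, hf, -⟩ := Submodule.exists_fun_fin_finrank_span_eq K (U : Set W)
  obtain ⟨u, hu⟩ := exists_image_Icc_eq_range f
  refine ⟨u, ?_⟩
  rw [← hU, hu, hf, Submodule.span_eq, hSUT]

theorem finrank_inf_sup_inf_add_finrank_inf {B' B C' C : Submodule K W} (hB : B' ≤ B)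
    (hC : C' ≤ C) :
    Module.finrank K ↥(B' ⊓ C ⊔ B ⊓ C') + Module.finrank K ↥(B' ⊓ C')
      = Module.finrank K ↥(B' ⊓ C) + Module.finrank K ↥(B ⊓ C') := by
  have h : B' ⊓ C ⊓ (B ⊓ C') = B' ⊓ C' := by
    rw [inf_inf_inf_comm, inf_eq_left.2 hB, inf_eq_right.2 hC]
  rw [← h]
  exact Submodule.finrank_sup_add_finrank_inf_eq _ _

end Complement

section Cells

variable (m : ℕ → ℕ → ℕ)

def cellIdx (i j : ℕ) : Finset (ℕ × ℕ × ℕ) :=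
  (Icc 1 (m i j)).map ⟨fun t => (i, j, t), fun _ _ h => by simpa using h⟩

def rectIdx (i j : ℕ) : Finset (ℕ × ℕ × ℕ) :=
  (Icc 1 i ×ˢ Icc 1 j).biUnion fun p => cellIdx m p.1 p.2

variable {m}

theorem mem_cellIdx {i j : ℕ} {x : ℕ × ℕ × ℕ} :
    x ∈ cellIdx m i j ↔ x.1 = i ∧ x.2.1 = j ∧ 1 ≤ x.2.2 ∧ x.2.2 ≤ m x.1 x.2.1 := by
  obtain ⟨a, b, t⟩ := x
  simp only [cellIdx, mem_map, mem_Icc]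
  constructor
  · rintro ⟨t, ht, ⟨⟩⟩
    exact ⟨rfl, rfl, ht⟩
  · rintro ⟨rfl, rfl, ht⟩
    exact ⟨t, ht, rfl⟩

theorem mem_rectIdx {i j : ℕ} {x : ℕ × ℕ × ℕ} :
    x ∈ rectIdx m i j ↔
      (1 ≤ x.1 ∧ x.1 ≤ i) ∧ (1 ≤ x.2.1 ∧ x.2.1 ≤ j) ∧ 1 ≤ x.2.2 ∧ x.2.2 ≤ m x.1 x.2.1 := by
  simp only [rectIdx, mem_biUnion, mem_product, mem_Icc, mem_cellIdx]
  constructor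
  · rintro ⟨⟨a, b⟩, ⟨hp1, hp2⟩, rfl, rfl, ht⟩
    exact ⟨hp1, hp2, ht⟩
  · rintro ⟨h1, h2, ht⟩
    exact ⟨(x.1, x.2.1), ⟨h1, h2⟩, rfl, rfl, ht⟩

theorem card_rectIdx (i j : ℕ) : #(rectIdx m i j) = rk m i j := by
  have hdisj : ((Icc 1 i ×ˢ Icc 1 j : Finset (ℕ × ℕ)) : Set (ℕ × ℕ)).PairwiseDisjoint
      fun p => cellIdx m p.1 p.2 := by
    intro p _ p' _ hpp'
    refine Finset.disjoint_left.2 fun x hx hx' => hpp' ?_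
    rw [mem_cellIdx] at hx hx'
    exact Prod.ext (hx.1.symm.trans hx'.1) (hx.2.1.symm.trans hx'.2.1)
  rw [rectIdx, card_biUnion hdisj, sum_product]
  simp [cellIdx, rk]

theorem rectIdx_zero_left (j : ℕ) : rectIdx m 0 j = ∅ := by
  simp [rectIdx]

theorem rectIdx_zero_right (i : ℕ) : rectIdx m i 0 = ∅ := by
  simp [rectIdx]

theorem rectIdx_succ_succ (i j : ℕ) :
    rectIdx m (i + 1) (j + 1)
      = rectIdx m i (j + 1) ∪ rectIdx m (i + 1) j ∪ cellIdx m (i + 1) (j + 1) := by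
  ext x
  simp only [mem_union, mem_rectIdx, mem_cellIdx]
  omega

theorem rectIdx_mono {i i' j j' : ℕ} (hi : i ≤ i') (hj : j ≤ j') :
    rectIdx m i j ⊆ rectIdx m i' j' := fun x hx => by
  rw [mem_rectIdx] at hx ⊢
  omega

theorem rectIdx_inter {q r i j : ℕ} (hi : i ≤ q) (hj : j ≤ r) :
    rectIdx m i r ∩ rectIdx m q j = rectIdx m i j := by
  ext x
  simp only [mem_inter, mem_rectIdx]
  omega

theorem coe_rectIdx_self (q r : ℕ) : (rectIdx m q r : Set (ℕ × ℕ × ℕ)) = Idx q r m := by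
  ext x
  simp only [mem_coe, mem_rectIdx, Idx, Set.mem_ofPred_eq]
  omega

theorem coe_rectIdx_left {q r i : ℕ} (hi : i ≤ q) :
    (rectIdx m i r : Set (ℕ × ℕ × ℕ)) = {p | p ∈ Idx q r m ∧ p.1 ≤ i} := by
  ext x
  simp only [mem_coe, mem_rectIdx, Idx, Set.mem_ofPred_eq]
  omega

theorem coe_rectIdx_right {q r j : ℕ} (hj : j ≤ r) :
    (rectIdx m q j : Set (ℕ × ℕ × ℕ)) = {p | p ∈ Idx q r m ∧ p.2.1 ≤ j} := by
  ext x
  simp only [mem_coe, mem_rectIdx, Idx, Set.mem_ofPred_eq]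
  omega

theorem rk_succ_succ (i j : ℕ) :
    rk m (i + 1) (j + 1) + rk m i j = rk m i (j + 1) + rk m (i + 1) j + m (i + 1) (j + 1) := by
  simp only [rk, sum_Icc_succ_top (Nat.le_add_left 1 _), sum_add_distrib]
  ring

end Cells

theorem image_cellIdx {M : Type*} (v : ℕ × ℕ × ℕ → M) (m : ℕ → ℕ → ℕ) (i j : ℕ) :
    v '' cellIdx m i j = (fun t => v (i, j, t)) '' Set.Icc 1 (m i j) := by
  rw [cellIdx, coe_map, coe_Icc, Set.image_image]
  rfl

theorem span_image_rectIdx_eq {R M : Type*} [Semiring R] [AddCommMonoid M] [Module R M]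
    {m : ℕ → ℕ → ℕ} {q r : ℕ} {v : ℕ × ℕ × ℕ → M} {F : ℕ → ℕ → Submodule R M}
    (hF0j : ∀ j, F 0 j = ⊥) (hFi0 : ∀ i, F i 0 = ⊥)
    (hF : ∀ i < q, ∀ j < r, F i (j + 1) ⊔ F (i + 1) j
      ⊔ Submodule.span R (v '' cellIdx m (i + 1) (j + 1)) = F (i + 1) (j + 1)) :
    ∀ i ≤ q, ∀ j ≤ r, Submodule.span R (v '' rectIdx m i j) = F i j := by
  intro i
  induction i with
  | zero => intro _ j _; simp [rectIdx_zero_left, hF0j]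
  | succ i ihi =>
    intro hi j
    induction j with
    | zero => intro _; simp [rectIdx_zero_right, hFi0]
    | succ j ihj =>
      intro hj
      rw [rectIdx_succ_succ, coe_union, coe_union, Set.image_union, Set.image_union,
        Submodule.span_union, Submodule.span_union, ihi (by omega) (j + 1) hj, ihj (by omega),
        hF i hi j hj]

variable {q r : ℕ} {m : ℕ → ℕ → ℕ} {B C : ℕ → Submodule k V}

theorem inOrbit_iff : InOrbit k V q r m B C ↔ ∃ v : ℕ × ℕ × ℕ → V,
    (LinearIndepOn k v (rectIdx m q r : Set (ℕ × ℕ × ℕ)) ∧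
      Submodule.span k (v '' rectIdx m q r) = ⊤) ∧
    (∀ i ≤ q, B i = Submodule.span k (v '' rectIdx m i r)) ∧
    (∀ j ≤ r, C j = Submodule.span k (v '' rectIdx m q j)) := by
  refine exists_congr fun v => and_congr (and_congr ?_ ?_) (and_congr ?_ ?_)
  · rw [coe_rectIdx_self]
    rfl
  · rw [coe_rectIdx_self]
  · exact forall₂_congr fun i hi => by rw [coe_rectIdx_left hi]
  · exact forall₂_congr fun j hj => by rw [coe_rectIdx_right hj]

theorem finrank_inf_eq_rk_of_inOrbit (h : InOrbit k V q r m B C) {i j : ℕ} (hi : i ≤ q)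
    (hj : j ≤ r) : Module.finrank k ↥(B i ⊓ C j) = rk m i j := by
  obtain ⟨v, ⟨hv, -⟩, hB, hC⟩ := inOrbit_iff.1 h
  have hsub : (rectIdx m i r : Set (ℕ × ℕ × ℕ)) ∪ rectIdx m q j ⊆ rectIdx m q r :=
    Set.union_subset (coe_subset.2 (rectIdx_mono hi le_rfl))
      (coe_subset.2 (rectIdx_mono le_rfl hj))
  rw [hB i hi, hC j hj, ← LinearIndepOn.span_image_inter (hv.mono hsub), ← coe_inter,
    rectIdx_inter hi hj,
    LinearIndepOn.finrank_span_image (hv.mono (coe_subset.2 (rectIdx_mono hi hj))),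
    card_rectIdx]

theorem exists_span_cell_complement [FiniteDimensional k V] {i j : ℕ} (hB : B i ≤ B (i + 1))
    (hC : C j ≤ C (j + 1))
    (hrk : ∀ i' ≤ i + 1, ∀ j' ≤ j + 1, Module.finrank k ↥(B i' ⊓ C j') = rk m i' j') :
    ∃ u : ℕ → V, B i ⊓ C (j + 1) ⊔ B (i + 1) ⊓ C j
      ⊔ Submodule.span k (u '' Set.Icc 1 (m (i + 1) (j + 1))) = B (i + 1) ⊓ C (j + 1) := by
  have hdim := finrank_inf_sup_inf_add_finrank_inf hB hC
  have hrect := rk_succ_succ (m := m) i j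
  rw [hrk i (by omega) j (by omega), hrk i (by omega) (j + 1) le_rfl,
    hrk (i + 1) le_rfl j (by omega)] at hdim
  refine exists_sup_span_image_Icc_eq
    (sup_le (inf_le_inf_right _ hB) (inf_le_inf_left _ hC)) ?_
  rw [hrk (i + 1) le_rfl (j + 1) le_rfl]
  omega

theorem inOrbit_of_finrank_inf_eq_rk [FiniteDimensional k V] (hB0 : B 0 = ⊥) (hC0 : C 0 = ⊥)
    (hBq : B q = ⊤) (hCr : C r = ⊤) (hB : ∀ i < q, B i ≤ B (i + 1))
    (hC : ∀ j < r, C j ≤ C (j + 1))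
    (hrk : ∀ i ≤ q, ∀ j ≤ r, Module.finrank k ↥(B i ⊓ C j) = rk m i j) :
    InOrbit k V q r m B C := by
  choose! u hu using fun i (hi : i < q) j (hj : j < r) =>
    exists_span_cell_complement (m := m) (hB i hi) (hC j hj)
      fun i' hi' j' hj' => hrk i' (by omega) j' (by omega)
  set v : ℕ × ℕ × ℕ → V := fun x => u (x.1 - 1) (x.2.1 - 1) x.2.2
  have hspan := span_image_rectIdx_eq (v := v) (F := fun i j => B i ⊓ C j)
    (by simp [hB0]) (by simp [hC0])
    (fun i hi j hj => by simpa [image_cellIdx, v] using hu i hi j hj)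
  have htop : Submodule.span k (v '' rectIdx m q r) = ⊤ := by
    rw [hspan q le_rfl r le_rfl, hBq, hCr, top_inf_eq]
  refine inOrbit_iff.2 ⟨v, ⟨linearIndepOn_of_span_image_eq_top_of_card_eq_finrank htop ?_, htop⟩,
    fun i hi => ?_, fun j hj => ?_⟩
  · rw [card_rectIdx, ← hrk q le_rfl r le_rfl, hBq, hCr, top_inf_eq, finrank_top]
  · rw [hspan i hi r le_rfl, hCr, inf_top_eq]
  · rw [hspan q le_rfl j hj, hBq, top_inf_eq]

theorem orbit_iff_rank_general (q r : ℕ)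
    (b c : ℕ → ℕ)
    {k V : Type*} [Field k] [AddCommGroup V] [Module k V]
    [FiniteDimensional k V]
    (m : ℕ → ℕ → ℕ)
    (B C : ℕ → Submodule k V) (hB : IsFlag k V q b B) (hC : IsFlag k V r c C) :
    InOrbit k V q r m B C ↔
      ∀ i : ℕ, 1 ≤ i → i ≤ q → ∀ j : ℕ, 1 ≤ j → j ≤ r →
        Module.finrank k ↥(B i ⊓ C j) = rk m i j := by
  obtain ⟨hB0, hBq, hBmono, -⟩ := hB
  obtain ⟨hC0, hCr, hCmono, -⟩ := hC
  refine ⟨fun h i _ hi j _ hj => finrank_inf_eq_rk_of_inOrbit h hi hj, fun h => ?_⟩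
  refine inOrbit_of_finrank_inf_eq_rk hB0 hC0 hBq hCr
    (fun i hi => by simpa using hBmono (i + 1) (by omega) hi)
    (fun j hj => by simpa using hCmono (j + 1) (by omega) hj) fun i hi j hj => ?_
  rcases i.eq_zero_or_pos with rfl | hi0
  · simp [hB0, rk]
  rcases j.eq_zero_or_pos with rfl | hj0
  · simp [hC0, rk]
  exact h i hi0 hi j hj0 hj

/-- for flags `B, C` with the prescribed quotient dimensions and a transport
matrix `M`, one has `(B, C) ∈ F_M` iff `dim (B i ∩ C j) = r_{ij}(M)` for all
`(i,j) ∈ [1,q] × [1,r]`. -/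
theorem orbit_iff_rank (n q r : ℕ) (hn : 0 < n) (hq : 0 < q) (hr : 0 < r)
    (b c : ℕ → ℕ) (hb : IsComposition n q b) (hc : IsComposition n r c)
    {k V : Type*} [Field k] [Infinite k] [AddCommGroup V] [Module k V]
    [FiniteDimensional k V] (hdim : Module.finrank k V = n)
    (m : ℕ → ℕ → ℕ) (hm : IsTransport q r b c m)
    (B C : ℕ → Submodule k V) (hB : IsFlag k V q b B) (hC : IsFlag k V r c C) :
    InOrbit k V q r m B C ↔
      ∀ i : ℕ, 1 ≤ i → i ≤ q → ∀ j : ℕ, 1 ≤ j → j ≤ r →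
        Module.finrank k ↥(B i ⊓ C j) = rk m i j :=
  orbit_iff_rank_general q r b c m B C hB hC

end TwoFlagsLine
end

section
/- (Uncircling Lemma) Let M be a transport matrix and S a nonempty set of matrix positions with m_{ij} > 0 for all (i,j) ∈ S. Let {v_{ijk}} be a basis of V indexed by M, define B_i = span{v_{i'jk} : i'≤i}, C_j = span{v_{ij'k} : j'≤j}, and A = span(Σ_{(i,j)∈S} v_{ij1}). Then (A, B_•, C_•) ∈ F_{M,[S]}, where [S] is the set of ≤-maximal elements of S. -/
/-!
Assign to each `p ∈ S` a maximal `d ∈ [S]` with `p ≤ d`, and replace `v_{d1}` by `v_{d1}` plus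
the sum of the `v_{p1}` over the non-maximal `p` assigned to `d`. Since `p ≤ d`, every `B_i` and
`C_j` containing `v_{d1}` also contains these `v_{p1}`, so this unitriangular change of basis
leaves all `B_i`, `C_j` unchanged, while the new vectors at `[S]` sum to `Σ_{p ∈ S} v_{p1}`.
-/

open Finset

namespace TwoFlagsLine

variable (k V : Type*) [Field k] [AddCommGroup V] [Module k V]

theorem idx_finite (q r : ℕ) (m : ℕ → ℕ → ℕ) : (Idx q r m).Finite := by
  refine (Set.finite_Icc (1, 1, 1) (q, r, rk m q r)).subset ?_
  rintro ⟨i, j, t⟩ ⟨hi1, hiq, hj1, hjr, ht1, htm⟩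
  have hmle : m i j ≤ rk m q r :=
    calc m i j ≤ ∑ l ∈ Icc 1 r, m i l := single_le_sum (fun _ _ => Nat.zero_le _) (mem_Icc.2 ⟨hj1, hjr⟩)
      _ ≤ rk m q r := single_le_sum (f := fun i => ∑ l ∈ Icc 1 r, m i l)
          (fun _ _ => Nat.zero_le _) (mem_Icc.2 ⟨hi1, hiq⟩)
  exact ⟨⟨hi1, hj1, ht1⟩, ⟨hiq, hjr, htm.trans hmle⟩⟩

section Uncircling

variable {k V}

theorem linearIndependent_of_span_range_eq {ι : Type*} [Finite ι] {u u' : ι → V}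
    (hu : LinearIndependent k u)
    (h : Submodule.span k (Set.range u') = Submodule.span k (Set.range u)) :
    LinearIndependent k u' := by
  have := Fintype.ofFinite ι
  rw [linearIndependent_iff_card_eq_finrank_span] at hu ⊢
  rwa [Set.finrank, h]

theorem span_image_add_sum_eq {ι κ : Type*} {v v' : ι → V} {s : Set ι} (g : κ → ι)
    (c : ι → Finset κ) (hv' : ∀ x, v' x = v x + ∑ y ∈ c x, v (g y))
    (hc : ∀ x ∈ s, ∀ y ∈ c x, g y ∈ s ∧ c (g y) = ∅) :
    Submodule.span k (v' '' s) = Submodule.span k (v '' s) := by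
  have hsum_mem : ∀ x ∈ s, ∀ w : ι → V, ∑ y ∈ c x, w (g y) ∈ Submodule.span k (w '' s) :=
    fun x hx w => Submodule.sum_mem _ fun y hy =>
      Submodule.subset_span (Set.mem_image_of_mem w (hc x hx y hy).1)
  refine le_antisymm (Submodule.span_le.2 ?_) (Submodule.span_le.2 ?_) <;>
    rintro _ ⟨x, hx, rfl⟩
  · rw [hv']
    exact Submodule.add_mem _ (Submodule.subset_span (Set.mem_image_of_mem v hx))
      (hsum_mem x hx v)
  · have hfix : ∑ y ∈ c x, v (g y) = ∑ y ∈ c x, v' (g y) :=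
      sum_congr rfl fun y hy => by simp [hv', (hc x hx y hy).2]
    have hvx : v x = v' x - ∑ y ∈ c x, v' (g y) := by rw [hv' x, hfix, add_sub_cancel_right]
    rw [SetLike.mem_coe, hvx]
    exact Submodule.sub_mem _ (Submodule.subset_span (Set.mem_image_of_mem v' hx))
      (hsum_mem x hx v')

theorem maxl_subset (S : Finset (ℕ × ℕ)) : maxl S ⊆ S := filter_subset _ _

theorem exists_mem_maxl_le {S : Finset (ℕ × ℕ)} {p : ℕ × ℕ} (hp : p ∈ S) :
    ∃ d ∈ maxl S, p ≤ d := by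
  obtain ⟨d, hpd, hd⟩ := S.exists_le_maximal hp
  exact ⟨d, mem_filter.2 ⟨hd.prop, fun p' hp' hle => le_antisymm hle (hd.2 hp' hle)⟩, hpd⟩

/-- For `x = (d, 1)` with `d ∈ [S]`: the non-maximal `p ∈ S` that `f` assigns to `d`, whose
vectors `v_{p1}` get folded into `v_{d1}`. -/
def absorbed (S : Finset (ℕ × ℕ)) (f : ℕ × ℕ → ℕ × ℕ) (x : ℕ × ℕ × ℕ) : Finset (ℕ × ℕ) :=
  if x.2.2 = 1 ∧ (x.1, x.2.1) ∈ maxl S then {p ∈ S \ maxl S | f p = (x.1, x.2.1)} else ∅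

def uncircle (S : Finset (ℕ × ℕ)) (f : ℕ × ℕ → ℕ × ℕ) (v : ℕ × ℕ × ℕ → V) :
    ℕ × ℕ × ℕ → V :=
  fun x => v x + ∑ p ∈ absorbed S f x, v (p.1, p.2, 1)

variable {S : Finset (ℕ × ℕ)} {f : ℕ × ℕ → ℕ × ℕ}

theorem sum_uncircle (hf : ∀ p ∈ S, f p ∈ maxl S ∧ p ≤ f p) (v : ℕ × ℕ × ℕ → V) :
    ∑ d ∈ maxl S, uncircle S f v (d.1, d.2, 1) = ∑ p ∈ S, v (p.1, p.2, 1) := by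
  have habs : ∀ d ∈ maxl S, absorbed S f (d.1, d.2, 1) = {p ∈ S \ maxl S | f p = d} :=
    fun d hd => if_pos ⟨rfl, hd⟩
  calc ∑ d ∈ maxl S, uncircle S f v (d.1, d.2, 1)
      = ∑ d ∈ maxl S, v (d.1, d.2, 1)
          + ∑ d ∈ maxl S, ∑ p ∈ S \ maxl S with f p = d, v (p.1, p.2, 1) := by
        rw [← sum_add_distrib]
        exact sum_congr rfl fun d hd => by rw [uncircle, habs d hd]
    _ = ∑ d ∈ maxl S, v (d.1, d.2, 1) + ∑ p ∈ S \ maxl S, v (p.1, p.2, 1) := by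
        rw [sum_fiberwise_of_maps_to fun p hp => (hf p (mem_sdiff.1 hp).1).1]
    _ = ∑ p ∈ S, v (p.1, p.2, 1) := by rw [add_comm, sum_sdiff (maxl_subset S)]

theorem span_uncircle_image_eq (hf : ∀ p ∈ S, f p ∈ maxl S ∧ p ≤ f p) (v : ℕ × ℕ × ℕ → V)
    {s : Set (ℕ × ℕ × ℕ)}
    (hs : ∀ x ∈ s, ∀ p ∈ S, x.2.2 = 1 → p ≤ (x.1, x.2.1) → (p.1, p.2, 1) ∈ s) :
    Submodule.span k (uncircle S f v '' s) = Submodule.span k (v '' s) := by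
  refine span_image_add_sum_eq (fun p => (p.1, p.2, 1)) (absorbed S f) (fun _ => rfl) ?_
  intro x hx p hp
  unfold absorbed at hp
  split_ifs at hp with hx1
  · obtain ⟨⟨hpS, hpmax⟩, hfp⟩ := by simpa only [mem_filter, mem_sdiff] using hp
    exact ⟨hs x hx p hpS hx1.1 (hfp ▸ (hf p hpS).2), if_neg fun h => hpmax h.2⟩
  · simp at hp

end Uncircling

theorem uncircling_general (q r : ℕ)
    {k V : Type*} [Field k] [AddCommGroup V] [Module k V]
    (m : ℕ → ℕ → ℕ)
    (S : Finset (ℕ × ℕ))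
    (hSpos : ∀ p ∈ S, 1 ≤ p.1 ∧ p.1 ≤ q ∧ 1 ≤ p.2 ∧ p.2 ≤ r ∧ 0 < m p.1 p.2)
    (v : ℕ × ℕ × ℕ → V) (hv : IsMBasis k V q r m v)
    (A : Submodule k V) (B C : ℕ → Submodule k V)
    (hA : A = Submodule.span k {∑ p ∈ S, v (p.1, p.2, 1)})
    (hB : ∀ i ≤ q, B i = Submodule.span k (v '' {p | p ∈ Idx q r m ∧ p.1 ≤ i}))
    (hC : ∀ j ≤ r, C j = Submodule.span k (v '' {p | p ∈ Idx q r m ∧ p.2.1 ≤ j})) :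
    InOrbitDec k V q r m (maxl S) A B C := by
  choose! f hf using fun p (hp : p ∈ S) => exists_mem_maxl_le hp
  have hSI : ∀ p ∈ S, (p.1, p.2, 1) ∈ Idx q r m := fun p hp =>
    let ⟨h1, h2, h3, h4, h5⟩ := hSpos p hp
    ⟨h1, h2, h3, h4, le_rfl, h5⟩
  have hspan : Submodule.span k (uncircle S f v '' Idx q r m) = ⊤ := by
    rw [span_uncircle_image_eq hf v fun _ _ p hp _ _ => hSI p hp, hv.2]
  have := (idx_finite q r m).to_subtype
  refine ⟨uncircle S f v, ⟨?_, hspan⟩, fun i hi => ?_, fun j hj => ?_, ?_⟩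
  · refine linearIndependent_of_span_range_eq hv.1 ?_
    rw [← Set.image_eq_range, ← Set.image_eq_range, hspan, hv.2]
  · rw [hB i hi, span_uncircle_image_eq hf v (s := {x | x ∈ Idx q r m ∧ x.1 ≤ i})
      fun x hx p hp _ hle => ⟨hSI p hp, hle.1.trans hx.2⟩]
  · rw [hC j hj, span_uncircle_image_eq hf v (s := {x | x ∈ Idx q r m ∧ x.2.1 ≤ j})
      fun x hx p hp _ hle => ⟨hSI p hp, hle.2.trans hx.2⟩]
  · rw [hA, sum_uncircle hf]

/-- Uncircling Lemma: if `S` is a nonempty set of positions with positive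
entries of a transport matrix `M`, `v` is a basis indexed by `M`, the flags `B, C` are
defined from `v` as usual and `A = span(Σ_{(i,j) ∈ S} v_{ij1})`, then
`(A, B, C) ∈ F_{M,[S]}` where `[S]` is the set of `≤`-maximal elements of `S`. -/
theorem uncircling (n q r : ℕ) (hn : 0 < n) (hq : 0 < q) (hr : 0 < r)
    (b c : ℕ → ℕ) (hb : IsComposition n q b) (hc : IsComposition n r c)
    {k V : Type*} [Field k] [Infinite k] [AddCommGroup V] [Module k V]
    [FiniteDimensional k V] (hdim : Module.finrank k V = n)
    (m : ℕ → ℕ → ℕ) (hm : IsTransport q r b c m)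
    (S : Finset (ℕ × ℕ)) (hS : S.Nonempty)
    (hSpos : ∀ p ∈ S, 1 ≤ p.1 ∧ p.1 ≤ q ∧ 1 ≤ p.2 ∧ p.2 ≤ r ∧ 0 < m p.1 p.2)
    (v : ℕ × ℕ × ℕ → V) (hv : IsMBasis k V q r m v)
    (A : Submodule k V) (B C : ℕ → Submodule k V)
    (hA : A = Submodule.span k {∑ p ∈ S, v (p.1, p.2, 1)})
    (hB : ∀ i ≤ q, B i = Submodule.span k (v '' {p | p ∈ Idx q r m ∧ p.1 ≤ i}))
    (hC : ∀ j ≤ r, C j = Submodule.span k (v '' {p | p ∈ Idx q r m ∧ p.2.1 ≤ j})) :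
    InOrbitDec k V q r m (maxl S) A B C :=
  uncircling_general q r m S hSpos v hv A B C hA hB hC

end TwoFlagsLine
end

section
/- (Ehresmann tableau criterion) Let w and y be permutations of {1,…,n}. Then y lies above w in the partial order on permutations generated by the relations u < τ∘u for τ a transposition with ℓ(τ∘u) = ℓ(u) + 1, if and only if #([i] ∩ w[j]) ≥ #([i] ∩ y[j]) for all 1 ≤ i, j ≤ n. -/
/-!
Swapping the values at positions `p < q` of `u`, where `u p < u q`, lowers `rkPerm u i j` by one
exactly on the rectangle `p < j ≤ q`, `u p < i ≤ u q`, and raises `ℓ` by `1 + 2m`, where `m` counts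
the points `(s, u s)` with `p < s < q` and `u p < u s < u q`. Hence a cover can only lower ranks
(swapping an inversion would lower `ℓ`), which is one direction.

Conversely, let the ranks of `y` be dominated by those of `x ≠ y`, and let `k` be the first position
where they differ. Then `x k < y k`, and swapping `k` with the first later position `l` such that
`x k < x l ≤ y k` is a cover (`m = 0`). Its rectangle lies where the ranks of `y` are strictly
smaller than those of `x`, so `y` stays dominated. As `ℓ ≤ n²` grows at each step, this reaches `y`.
-/

open Finset

namespace TwoFlagsLine

/-- The number of inversions `ℓ(w)` of a permutation. -/
def invNum (n : ℕ) (w : Equiv.Perm (Fin n)) : ℕ :=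
  (Finset.univ.filter fun p : Fin n × Fin n => p.1 < p.2 ∧ w p.2 < w p.1).card

/-- `#([i] ∩ w[j])` for a permutation `w` of `{1, …, n}` realized on `Fin n`
(1-based indices `i`, `j`): the number of `a < j` with `w(a) < i` (0-based). -/
def rkPerm (n : ℕ) (w : Equiv.Perm (Fin n)) (i j : ℕ) : ℕ :=
  (Finset.univ.filter fun a : Fin n => (a : ℕ) < j ∧ (w a : ℕ) < i).card

/-- The covering relation: `v = τ ∘ u` for a transposition `τ` with
`ℓ(τ ∘ u) = ℓ(u) + 1`. -/
def BruhatCov (n : ℕ) (u v : Equiv.Perm (Fin n)) : Prop :=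
  (∃ a b : Fin n, a ≠ b ∧ v = Equiv.swap a b * u) ∧ invNum n v = invNum n u + 1

theorem sum_sum_eq_of_eq_zero_of_notMem {α M : Type*} [Fintype α] [DecidableEq α]
    [AddCommGroup M] (s : Finset α) (f : α → α → M) (hf : ∀ a ∉ s, ∀ b ∉ s, f a b = 0) :
    ∑ a, ∑ b, f a b = ∑ a ∈ s, ∑ b, f a b + ∑ a, ∑ b ∈ s, f a b - ∑ a ∈ s, ∑ b ∈ s, f a b := by
  have hrow : ∀ a ∉ s, ∑ b, f a b = ∑ b ∈ s, f a b := fun a ha => by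
    rw [← sum_add_sum_compl s, sum_eq_zero fun b hb => hf a ha b (mem_compl.1 hb), add_zero]
  rw [← sum_add_sum_compl s fun a => ∑ b, f a b, sum_congr rfl fun a ha => hrow a (mem_compl.1 ha),
    ← sum_add_sum_compl s fun a => ∑ b ∈ s, f a b]
  abel

section Swap

variable {n : ℕ}

def invInd (w : Equiv.Perm (Fin n)) (a b : Fin n) : ℤ :=
  if a < b ∧ w b < w a then 1 else 0

theorem invNum_eq_sum (w : Equiv.Perm (Fin n)) : (invNum n w : ℤ) = ∑ a, ∑ b, invInd w a b := by
  rw [invNum, card_filter, Fintype.sum_prod_type]; push_cast; rfl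

theorem rkPerm_eq_sum (w : Equiv.Perm (Fin n)) (i j : ℕ) :
    (rkPerm n w i j : ℤ) = ∑ a : Fin n, if (a : ℕ) < j ∧ (w a : ℕ) < i then 1 else 0 := by
  rw [rkPerm, card_filter]; push_cast; rfl

variable (u : Equiv.Perm (Fin n)) {p q : Fin n}

theorem swap_mul_apply_of_ne {s : Fin n} (hp : s ≠ p) (hq : s ≠ q) :
    (Equiv.swap (u p) (u q) * u) s = u s := by
  simp [Equiv.swap_apply_of_ne_of_ne (u.injective.ne hp) (u.injective.ne hq)]

theorem rkPerm_swap_mul (hpq : p < q) (hu : u p < u q) (i j : ℕ) :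
    rkPerm n (Equiv.swap (u p) (u q) * u) i j
      + (if (p : ℕ) < j ∧ j ≤ q ∧ (u p : ℕ) < i ∧ i ≤ u q then 1 else 0) = rkPerm n u i j := by
  have hdiff := Fintype.sum_eq_add p q hpq.ne (f := fun a : Fin n =>
      (if (a : ℕ) < j ∧ (u a : ℕ) < i then 1 else 0)
        - (if (a : ℕ) < j ∧ ((Equiv.swap (u p) (u q) * u) a : ℕ) < i then 1 else (0 : ℤ)))
    fun s ⟨hp, hq⟩ => by simp [swap_mul_apply_of_ne u hp hq]
  rw [sum_sub_distrib, ← rkPerm_eq_sum, ← rkPerm_eq_sum] at hdiff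
  simp only [Equiv.Perm.mul_apply, Equiv.swap_apply_left, Equiv.swap_apply_right] at hdiff
  zify
  split_ifs at hdiff ⊢ <;> omega

theorem invInd_swap_mul_add (hpq : p < q) (hu : u p < u q) (s : Fin n) :
    let v := Equiv.swap (u p) (u q) * u
    invInd v p s + invInd v q s + invInd v s p + invInd v s q
      = invInd u p s + invInd u q s + invInd u s p + invInd u s q
        + 2 * (if p < s ∧ s < q ∧ u p < u s ∧ u s < u q then 1 else 0)
        + (if s = p then 1 else 0) + (if s = q then 1 else 0) := by
  have hvp : (Equiv.swap (u p) (u q) * u) p = u q := by simp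
  have hvq : (Equiv.swap (u p) (u q) * u) q = u p := by simp
  by_cases hsp : s = p
  · subst hsp; simp only [invInd, hvp, hvq]; split_ifs <;> omega
  by_cases hsq : s = q
  · subst hsq; simp only [invInd, hvp, hvq]; split_ifs <;> omega
  have := u.injective.ne hsp
  have := u.injective.ne hsq
  simp only [invInd, hvp, hvq, swap_mul_apply_of_ne u hsp hsq, if_neg hsp, if_neg hsq]
  grind

theorem invNum_swap_mul (hpq : p < q) (hu : u p < u q) :
    invNum n (Equiv.swap (u p) (u q) * u) = invNum n u + 1
      + 2 * #{s | p < s ∧ s < q ∧ u p < u s ∧ u s < u q} := by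
  set v := Equiv.swap (u p) (u q) * u with hv
  set e : Fin n → Fin n → ℤ := fun a b => invInd v a b - invInd u a b with he
  have hcross : ∀ a ∉ ({p, q} : Finset (Fin n)), ∀ b ∉ ({p, q} : Finset (Fin n)), e a b = 0 := by
    intro a ha b hb
    simp only [mem_insert, mem_singleton, not_or] at ha hb
    have hva : v a = u a := swap_mul_apply_of_ne u ha.1 ha.2
    have hvb : v b = u b := swap_mul_apply_of_ne u hb.1 hb.2
    simp [he, invInd, hva, hvb]
  have hcorner : ∑ a ∈ {p, q}, ∑ b ∈ {p, q}, e a b = 1 := by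
    simp only [sum_pair hpq.ne, he, invInd, hv, Equiv.Perm.mul_apply, Equiv.swap_apply_left,
      Equiv.swap_apply_right]
    split_ifs <;> omega
  have hlines := sum_congr rfl fun s (_ : s ∈ univ) => invInd_swap_mul_add u hpq hu s
  simp only [sum_add_distrib, ← mul_sum, sum_boole, filter_eq', mem_univ, if_true,
    card_singleton] at hlines
  have htotal : ∑ a, ∑ b, e a b = 2 * #{s | p < s ∧ s < q ∧ u p < u s ∧ u s < u q} + 1 := by
    rw [sum_sum_eq_of_eq_zero_of_notMem _ e hcross, hcorner]
    simp only [he, sum_pair hpq.ne, sum_add_distrib, sum_sub_distrib]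
    push_cast at hlines
    linarith
  rw [he] at htotal
  simp only [sum_sub_distrib, ← invNum_eq_sum] at htotal
  omega

theorem apply_lt_apply_of_invNum_lt (hpq : p < q)
    (h : invNum n u < invNum n (Equiv.swap (u p) (u q) * u)) : u p < u q := by
  refine (lt_or_gt_of_ne (u.injective.ne hpq.ne)).resolve_right fun hqp => ?_
  set v := Equiv.swap (u p) (u q) * u with hv
  have hvp : v p = u q := by simp [hv]
  have hvq : v q = u p := by simp [hv]
  have hvu : Equiv.swap (v p) (v q) * v = u := by
    rw [hvp, hvq, hv, Equiv.swap_comm, ← mul_assoc, Equiv.swap_mul_self, one_mul]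
  have := invNum_swap_mul v hpq (by rwa [hvp, hvq])
  rw [hvu] at this
  omega

end Swap

section Forward

variable {n : ℕ}

theorem rkPerm_le_of_bruhatCov {u v : Equiv.Perm (Fin n)} (h : BruhatCov n u v) (i j : ℕ) :
    rkPerm n v i j ≤ rkPerm n u i j := by
  obtain ⟨⟨a, b, hab, rfl⟩, hlen⟩ := h
  obtain ⟨p, rfl⟩ := u.surjective a
  obtain ⟨q, rfl⟩ := u.surjective b
  have hpq : p ≠ q := fun h => hab (h ▸ rfl)
  wlog hlt : p < q generalizing p q
  · rw [Equiv.swap_comm] at hlen ⊢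
    exact this q p (Ne.symm hab) hlen hpq.symm (hpq.symm.lt_of_le (not_lt.1 hlt))
  have := rkPerm_swap_mul u hlt (apply_lt_apply_of_invNum_lt u hlt (by omega)) i j
  omega

theorem rkPerm_le_of_reflTransGen {w y : Equiv.Perm (Fin n)}
    (h : Relation.ReflTransGen (BruhatCov n) w y) (i j : ℕ) : rkPerm n y i j ≤ rkPerm n w i j := by
  induction h with
  | refl => exact le_rfl
  | tail _ hcov ih => exact (rkPerm_le_of_bruhatCov hcov i j).trans ih

end Forward

section Backward

variable {n : ℕ}

theorem rkPerm_min_min (w : Equiv.Perm (Fin n)) (i j : ℕ) :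
    rkPerm n w (min i n) (min j n) = rkPerm n w i j := by
  unfold rkPerm
  congr 1
  ext a
  simp only [mem_filter, mem_univ, true_and]
  have := a.isLt
  have := (w a).isLt
  omega

theorem rkPerm_le_of_forall_le {w y : Equiv.Perm (Fin n)}
    (h : ∀ i j : ℕ, 1 ≤ i → i ≤ n → 1 ≤ j → j ≤ n → rkPerm n y i j ≤ rkPerm n w i j)
    (i j : ℕ) : rkPerm n y i j ≤ rkPerm n w i j := by
  rw [← rkPerm_min_min w, ← rkPerm_min_min y]
  by_cases hij : 1 ≤ min i n ∧ 1 ≤ min j n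
  · exact h _ _ hij.1 (min_le_right _ _) hij.2 (min_le_right _ _)
  · have : rkPerm n y (min i n) (min j n) = 0 := by
      rw [rkPerm, card_eq_zero, filter_eq_empty_iff]
      intro a _
      omega
    omega

theorem rkPerm_add_card_filter (w : Equiv.Perm (Fin n)) {i i' : ℕ} (h : i ≤ i') (j : ℕ) :
    rkPerm n w i j + #{a : Fin n | (a : ℕ) < j ∧ i ≤ w a ∧ (w a : ℕ) < i'} = rkPerm n w i' j := by
  rw [rkPerm, rkPerm, ← card_union_of_disjoint]
  · congr 1
    ext a
    simp only [mem_union, mem_filter, mem_univ, true_and]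
    omega
  · rw [disjoint_filter]
    omega

-- Among the first `j` positions, those with a value in `[i, i')` include `k` for `y`, while
-- for `x` they all lie left of `k`, where `x` and `y` agree.
theorem rkPerm_add_rkPerm_lt {x y : Equiv.Perm (Fin n)} {k : Fin n} {i i' j : ℕ}
    (hagree : ∀ a < k, x a = y a) (hj : (k : ℕ) < j) (hi : i ≤ y k) (hi' : (y k : ℕ) < i')
    (hgap : ∀ a, k ≤ a → (a : ℕ) < j → ¬(i ≤ x a ∧ (x a : ℕ) < i')) :
    rkPerm n x i' j + rkPerm n y i j < rkPerm n y i' j + rkPerm n x i j := by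
  rw [← rkPerm_add_card_filter x (hi.trans hi'.le), ← rkPerm_add_card_filter y (hi.trans hi'.le)]
  suffices #{a : Fin n | (a : ℕ) < j ∧ i ≤ x a ∧ (x a : ℕ) < i'}
      < #{a : Fin n | (a : ℕ) < j ∧ i ≤ y a ∧ (y a : ℕ) < i'} by omega
  refine (card_le_card fun a ha => ?_).trans_lt
    (card_erase_lt_of_mem (a := k) (by simp [hj, hi, hi']))
  simp only [mem_filter, mem_univ, true_and, mem_erase] at ha ⊢
  have hak : a < k := not_le.1 fun hka => hgap a hka ha.1 ha.2
  rw [← hagree a hak]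
  exact ⟨hak.ne, ha⟩

theorem apply_lt_apply_of_rkPerm_le {x y : Equiv.Perm (Fin n)} {k : Fin n}
    (hagree : ∀ a < k, x a = y a) (hk : x k ≠ y k)
    (hrk : ∀ i j, rkPerm n y i j ≤ rkPerm n x i j) : x k < y k := by
  by_contra hyx
  have hlt := rkPerm_add_rkPerm_lt (i := 0) (i' := y k + 1) (j := k + 1) hagree (by omega)
    (Nat.zero_le _) (Nat.lt_succ_self _) fun a hka haj => by
      obtain rfl : a = k := by omega
      omega
  have h0 : ∀ w : Equiv.Perm (Fin n), rkPerm n w 0 (k + 1) = 0 := fun w => by simp [rkPerm]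
  rw [h0, h0] at hlt
  exact (hrk _ _).not_gt (by simpa using hlt)

theorem lt_symm_apply_of_agree {x y : Equiv.Perm (Fin n)} {k : Fin n}
    (hagree : ∀ a < k, x a = y a) (hk : x k ≠ y k) : k < x.symm (y k) := by
  rcases lt_trichotomy (x.symm (y k)) k with h | h | h
  · have := hagree _ h
    rw [Equiv.apply_symm_apply] at this
    exact absurd (y.injective this) h.ne'
  · have := x.apply_symm_apply (y k)
    rw [h] at this
    exact absurd this hk
  · exact h

theorem rkPerm_lt_of_agree {x y : Equiv.Perm (Fin n)} {k : Fin n} {i j : ℕ}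
    (hagree : ∀ a < k, x a = y a) (hrk : ∀ i j, rkPerm n y i j ≤ rkPerm n x i j)
    (hj : (k : ℕ) < j) (hxi : (x k : ℕ) < i) (hiy : i ≤ y k)
    (hgap : ∀ a, k < a → (a : ℕ) < j → x a < x k ∨ y k < x a) :
    rkPerm n y i j < rkPerm n x i j := by
  have hlt := rkPerm_add_rkPerm_lt (i' := y k + 1) hagree hj hiy (Nat.lt_succ_self _)
    fun a hka haj => by
      rcases hka.eq_or_lt with rfl | hka
      · omega
      · have := hgap a hka haj
        omega
  have := hrk (y k + 1) j
  omega

theorem exists_bruhatCov_of_rkPerm_le {x y : Equiv.Perm (Fin n)} (hne : x ≠ y)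
    (hrk : ∀ i j, rkPerm n y i j ≤ rkPerm n x i j) :
    ∃ x', BruhatCov n x x' ∧ ∀ i j, rkPerm n y i j ≤ rkPerm n x' i j := by
  obtain ⟨k, hk, hkmin⟩ := wellFounded_lt.has_min {a | x a ≠ y a}
    (not_forall.1 fun h => hne (Equiv.ext h))
  have hagree : ∀ a < k, x a = y a := fun a hak => by_contra fun h => hkmin a h hak
  have hxy : x k < y k := apply_lt_apply_of_rkPerm_le hagree hk hrk
  obtain ⟨l, ⟨hkl, hxl, hly⟩, hlmin⟩ := wellFounded_lt.has_min
    {a | k < a ∧ x k < x a ∧ x a ≤ y k}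
    ⟨x.symm (y k), lt_symm_apply_of_agree hagree hk, by simpa using hxy⟩
  have hgap : ∀ a, k < a → a < l → x a < x k ∨ y k < x a := fun a hka hal => by
    by_contra h
    push Not at h
    exact hlmin a ⟨hka, h.1.lt_of_ne (x.injective.ne hka.ne), h.2⟩ hal
  refine ⟨Equiv.swap (x k) (x l) * x, ⟨⟨_, _, x.injective.ne hkl.ne, rfl⟩, ?_⟩, fun i j => ?_⟩
  · rw [invNum_swap_mul x hkl hxl, card_eq_zero.2, mul_zero, add_zero]
    refine filter_eq_empty_iff.2 fun a _ ha => ?_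
    have := hgap a ha.1 ha.2.1
    have : x a ≤ y k := ha.2.2.2.le.trans hly
    omega
  have hswap := rkPerm_swap_mul x hkl hxl i j
  split_ifs at hswap with hrect
  · have := rkPerm_lt_of_agree hagree hrk hrect.1 hrect.2.2.1 (by omega)
      fun a hka haj => hgap a hka (by omega)
    omega
  · have := hrk i j
    omega

theorem invNum_le (w : Equiv.Perm (Fin n)) : invNum n w ≤ n * n := by
  rw [invNum]
  exact (card_filter_le _ _).trans (by simp)

theorem reflTransGen_bruhatCov_of_rkPerm_le {x y : Equiv.Perm (Fin n)}
    (hrk : ∀ i j, rkPerm n y i j ≤ rkPerm n x i j) : Relation.ReflTransGen (BruhatCov n) x y := by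
  by_cases hxy : x = y
  · exact hxy ▸ .refl
  obtain ⟨x', hcov, hrk'⟩ := exists_bruhatCov_of_rkPerm_le hxy hrk
  exact .head hcov (reflTransGen_bruhatCov_of_rkPerm_le hrk')
termination_by n * n - invNum n x
decreasing_by
  have := hcov.2
  have := invNum_le x'
  omega

end Backward

/-- Ehresmann tableau criterion: `y` lies above `w` in the order
generated by `u < τ ∘ u`, `ℓ(τ ∘ u) = ℓ(u) + 1`, iff
`#([i] ∩ w[j]) ≥ #([i] ∩ y[j])` for all `1 ≤ i, j ≤ n`. -/
theorem bruhat_iff_tableau (n : ℕ) (w y : Equiv.Perm (Fin n)) :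
    Relation.ReflTransGen (BruhatCov n) w y ↔
      ∀ i j : ℕ, 1 ≤ i → i ≤ n → 1 ≤ j → j ≤ n → rkPerm n y i j ≤ rkPerm n w i j :=
  ⟨fun h i j _ _ _ _ => rkPerm_le_of_reflTransGen h i j,
    fun h => reflTransGen_bruhatCov_of_rkPerm_le (rkPerm_le_of_forall_le h)⟩

end TwoFlagsLine
end
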